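/- For p ≥ 0, applying the degenerate differential operator (x d/dx + r)_{p,λ} to e^x yields e^x φ_{p,λ}^{(r)}(x), i.e., (x d/dx + r)_{p,λ} e^x = ∑_{n=0}^∞ (n+r)_{p,λ} x^n/n! = e^x φ_{p,λ}^{(r)}(x). -/

import Mathlib

/-- Generalized falling factorial `(y)_{m,λ} = y(y-λ)⋯(y-(m-1)λ)`. -/
noncomputable def degFallFact (y l : ℝ) (m : ℕ) : ℝ :=
  ∏ i ∈ Finset.range m, (y - i * l)

/-- The degenerate differential operator
`(x d/dx + r)_{p,λ} = (x d/dx + r)(x d/dx + r - λ)⋯(x d/dx + r - (p-1)λ)`,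
the innermost (rightmost) factor being applied first. -/
noncomputable def degOp (r l : ℝ) : ℕ → (ℝ → ℝ) → (ℝ → ℝ)
  | 0, f => f
  | p + 1, f => degOp r l p (fun x => x * deriv f x + (r - p * l) * f x)

/-! Conjugated by `e^x`, each factor `x d/dx + c` of the operator becomes the polynomial operator
`q ↦ X q' + (X + c) q`, so the operator sends `e^x` to `e^x Q(x)` for a polynomial `Q`. The linear
functional `X^k ↦ n(n-1)⋯(n-k+1)` intertwines that polynomial operator with multiplication by
`n + c`, and since `∑ₙ n(n-1)⋯(n-k+1) xⁿ/n! = x^k e^x`, the exponential generating function of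
its values on any polynomial `q` is `e^x q(x)`. Applied to `Q` this gives the series; applied to
`∑ S p k X^k`, which has the same values by the Stirling expansion of `(n + r)_{p,λ}`, it gives the
same series again, and uniqueness of sums identifies the two closed forms. -/

open Polynomial

theorem Nat.cast_descFactorial_eq_prod_range {R : Type*} [CommRing R] (n k : ℕ) :
    (n.descFactorial k : R) = ∏ i ∈ Finset.range k, ((n : R) - i) := by
  rw [← descPochhammer_eval_eq_prod_range, descPochhammer_eval_eq_descFactorial]

theorem hasSum_descFactorial_mul_pow_div_factorial (k : ℕ) (x : ℝ) :
    HasSum (fun n : ℕ => n.descFactorial k * x ^ n / n.factorial) (x ^ k * Real.exp x) := by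
  let f : ℕ → ℝ := fun n => n.descFactorial k * x ^ n / n.factorial
  have hshift : (fun n => f (n + k)) = fun n => x ^ k * (x ^ n / n.factorial) := by
    funext n
    have hfact : ((n + k).factorial : ℝ) = n.factorial * (n + k).descFactorial k := by
      have h := Nat.factorial_mul_descFactorial (Nat.le_add_left k n)
      rw [Nat.add_sub_cancel] at h
      exact_mod_cast h.symm
    have hpos : ((n + k).descFactorial k : ℝ) ≠ 0 := by
      exact_mod_cast (Nat.descFactorial_pos.mpr (Nat.le_add_left k n)).ne'
    simp only [f, hfact, pow_add]
    field_simp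
  have hinit : ∑ i ∈ Finset.range k, f i = 0 :=
    Finset.sum_eq_zero fun i hi => by
      simp [f, Nat.descFactorial_eq_zero_iff_lt.mpr (Finset.mem_range.mp hi)]
  have hexp : HasSum (fun n : ℕ => x ^ k * (x ^ n / n.factorial)) (x ^ k * Real.exp x) := by
    rw [Real.exp_eq_exp_ℝ]
    exact (NormedSpace.expSeries_div_hasSum_exp x).mul_left (x ^ k)
  rw [← hshift, hasSum_nat_add_iff, hinit, add_zero] at hexp
  exact hexp

section CommRing

variable {R : Type*} [CommRing R]

variable (R) in
noncomputable def descFactorialEval (n : ℕ) : R[X] →ₗ[R] R :=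
  lsum fun k => (n.descFactorial k : R) • LinearMap.id

theorem descFactorialEval_monomial (n k : ℕ) (a : R) :
    descFactorialEval R n (monomial k a) = a * n.descFactorial k := by
  simp [descFactorialEval, mul_comm]

theorem descFactorialEval_one (n : ℕ) : descFactorialEval R n 1 = 1 := by
  simpa using descFactorialEval_monomial n 0 (1 : R)

theorem Polynomial.X_mul_derivative_monomial (k : ℕ) (a : R) :
    X * derivative (monomial k a) = monomial k (k * a) := by
  cases k with
  | zero => simp
  | succ k => rw [derivative_monomial_succ, X_mul_monomial, mul_comm]; push_cast; rfl

/-- Conjugated by `e^x`, the operator `x d/dx + c` acts on polynomials as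
`q ↦ X q' + (X + c) q`. -/
noncomputable def conjExpStep (c : R) (q : R[X]) : R[X] :=
  X * derivative q + (X + C c) * q

theorem descFactorialEval_conjExpStep (n : ℕ) (c : R) (q : R[X]) :
    descFactorialEval R n (conjExpStep c q) = (n + c) * descFactorialEval R n q := by
  induction q using Polynomial.induction_on' with
  | add q₁ q₂ h₁ h₂ =>
    simp only [conjExpStep, mul_add, map_add] at h₁ h₂ ⊢
    linear_combination h₁ + h₂
  | monomial k a =>
    simp only [conjExpStep, X_mul_derivative_monomial, add_mul, X_mul_monomial, C_mul_monomial,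
      map_add, descFactorialEval_monomial, Nat.cast_descFactorial_eq_prod_range,
      Finset.prod_range_succ]
    ring

end CommRing

theorem hasSum_descFactorialEval_mul_pow_div_factorial (q : ℝ[X]) (x : ℝ) :
    HasSum (fun n : ℕ => descFactorialEval ℝ n q * x ^ n / n.factorial)
      (Real.exp x * q.eval x) := by
  induction q using Polynomial.induction_on' with
  | add q₁ q₂ h₁ h₂ => simpa only [map_add, eval_add, add_mul, add_div, mul_add] using h₁.add h₂
  | monomial k a =>
    simpa only [descFactorialEval_monomial, eval_monomial, mul_assoc, mul_div_assoc, mul_comm,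
      mul_left_comm] using (hasSum_descFactorial_mul_pow_div_factorial k x).mul_left a

noncomputable def conjExpOp (r l : ℝ) : ℕ → ℝ[X] → ℝ[X]
  | 0, q => q
  | p + 1, q => conjExpOp r l p (conjExpStep (r - p * l) q)

theorem mul_deriv_add_mul_exp_mul_eval (c : ℝ) (q : ℝ[X]) :
    (fun y => y * deriv (fun y => Real.exp y * q.eval y) y + c * (Real.exp y * q.eval y))
      = fun y => Real.exp y * (conjExpStep c q).eval y := by
  funext y
  rw [deriv_fun_mul Real.differentiable_exp.differentiableAt q.differentiableAt, Real.deriv_exp,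
    Polynomial.deriv]
  simp only [conjExpStep, eval_add, eval_mul, eval_X, eval_C]
  ring

theorem degOp_exp_mul_eval (r l : ℝ) (p : ℕ) (q : ℝ[X]) :
    degOp r l p (fun y => Real.exp y * q.eval y)
      = fun y => Real.exp y * (conjExpOp r l p q).eval y := by
  induction p generalizing q with
  | zero => rfl
  | succ p ih => rw [degOp, mul_deriv_add_mul_exp_mul_eval, ih, conjExpOp]

theorem descFactorialEval_conjExpOp (n : ℕ) (r l : ℝ) (p : ℕ) (q : ℝ[X]) :
    descFactorialEval ℝ n (conjExpOp r l p q) =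
      degFallFact (n + r) l p * descFactorialEval ℝ n q := by
  induction p generalizing q with
  | zero => simp [conjExpOp, degFallFact]
  | succ p ih =>
    rw [conjExpOp, ih, descFactorialEval_conjExpStep, degFallFact, degFallFact,
      Finset.prod_range_succ]
    ring

/-- `(x d/dx + r)_{p,λ} e^x = ∑_{n≥0} (n+r)_{p,λ} x^n/n! = e^x φ_{p,λ}^{(r)}(x)`,
where `φ_{p,λ}^{(r)}(x) = ∑_{k=0}^p {p+r brace k+r}_{r,λ} x^k`. -/
theorem degOp_exp (l : ℝ) (p r : ℕ) (S : ℕ → ℕ → ℝ)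
    (hS : ∀ (m : ℕ) (x : ℝ), degFallFact (x + r) l m =
      ∑ k ∈ Finset.range (m + 1), S m k * ∏ i ∈ Finset.range k, (x - i))
    (x : ℝ) :
    HasSum (fun n : ℕ => degFallFact (n + r) l p * x ^ n / n.factorial)
      (degOp r l p Real.exp x) ∧
    degOp r l p Real.exp x =
      Real.exp x * ∑ k ∈ Finset.range (p + 1), S p k * x ^ k := by
  have hop : degOp r l p Real.exp x = Real.exp x * (conjExpOp r l p 1).eval x := by
    simpa using congrFun (degOp_exp_mul_eval r l p 1) x
  have hseries : HasSum (fun n : ℕ => degFallFact (n + r) l p * x ^ n / n.factorial)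
      (degOp r l p Real.exp x) := by
    simpa [hop, descFactorialEval_conjExpOp, descFactorialEval_one] using
      hasSum_descFactorialEval_mul_pow_div_factorial (conjExpOp r l p 1) x
  have hstirling (n : ℕ) : degFallFact (n + r) l p =
      descFactorialEval ℝ n (∑ k ∈ Finset.range (p + 1), monomial k (S p k)) := by
    simp only [hS, map_sum, descFactorialEval_monomial, Nat.cast_descFactorial_eq_prod_range]
  refine ⟨hseries, hseries.unique ?_⟩
  simpa [hstirling, eval_finsetSum] using hasSum_descFactorialEval_mul_pow_div_factorial
    (∑ k ∈ Finset.range (p + 1), monomial k (S p k)) x
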